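/- For every n ≥ 0 the polynomial identity Σ_{j=0}^{n} φ(j)·e_{n−j}(v) = 2^n · n! · Σ_{j=0}^{n} binom(2j, j)·4^{−j}·v^{n−j} holds in ℝ[v]. -/

import Mathlib

/-!
Write `S_n = ∑_{j ≤ n} φ(j) e_{n-j}`. Convolving the recurrence for `e_n` with `φ` turns its
`m`-term into `∑_k (φ * m)_k e_{n-k}`, and the recurrence for `m` makes `(φ * m)_k = φ(k+1)`
(the same computation, with `m` in place of `e`). Since `φ(k+1) = (2k+1) φ(k)`, the weights
`2(n-k)+1` and `2k+1` add up to `2(n+1)`, so `S_{n+1} = 2(n+1) v S_n + φ(n+1)`.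
The right-hand side satisfies the same recurrence because
`2^n n! binom(2n, n) / 4^n = (2n)! / (2^n n!) = φ(n)`.
-/

open Polynomial

/-- `φ(n) = (2n−1)!! = (2n)!/(2^n·n!)` (the division is exact). -/
def phi (n : ℕ) : ℕ := (2 * n).factorial / (2 ^ n * n.factorial)

open Finset

open scoped Nat

theorem factorial_two_mul_eq (n : ℕ) : (2 * n)! = (2 * n - 1)‼ * (2 ^ n * n !) := by
  cases n with
  | zero => rfl
  | succ n =>
    rw [show 2 * (n + 1) = 2 * n + 1 + 1 by ring, Nat.factorial_eq_mul_doubleFactorial,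
      show 2 * n + 1 + 1 = 2 * (n + 1) by ring, Nat.doubleFactorial_two_mul, mul_comm]
    rfl

theorem phi_eq_doubleFactorial (n : ℕ) : phi n = (2 * n - 1)‼ :=
  Nat.div_eq_of_eq_mul_left (by positivity) (factorial_two_mul_eq n)

theorem phi_zero : phi 0 = 1 := by
  rw [phi_eq_doubleFactorial]; rfl

theorem phi_succ (n : ℕ) : phi (n + 1) = (2 * n + 1) * phi n := by
  rw [phi_eq_doubleFactorial, phi_eq_doubleFactorial, show 2 * (n + 1) - 1 = 2 * n + 1 by omega,
    Nat.doubleFactorial_add_one]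

theorem two_pow_mul_factorial_mul_choose_div_four_pow (n : ℕ) :
    (2 ^ n * n ! : ℝ) * ((2 * n).choose n / 4 ^ n) = phi n := by
  have hchoose : ((2 * n).choose n * n ! * n ! : ℝ) = (2 * n - 1)‼ * (2 ^ n * n !) := by
    have h := Nat.choose_mul_factorial_mul_factorial (show n ≤ 2 * n by omega)
    rw [show 2 * n - n = n by omega, factorial_two_mul_eq] at h
    exact_mod_cast h
  have h4 : (4 : ℝ) ^ n = 2 ^ n * 2 ^ n := by rw [← mul_pow]; norm_num
  rw [phi_eq_doubleFactorial, h4]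
  field_simp
  apply mul_right_cancel₀ (show (n ! : ℝ) ≠ 0 by positivity)
  linear_combination hchoose

theorem sum_range_convolution_assoc {R : Type*} [CommSemiring R] (a b c : ℕ → R) (n : ℕ) :
    ∑ j ∈ range (n + 1), a j * ∑ i ∈ range (n - j + 1), b i * c (n - j - i) =
      ∑ k ∈ range (n + 1), (∑ j ∈ range (k + 1), a j * b (k - j)) * c (n - k) := by
  have h := congrArg (PowerSeries.coeff (R := R) n)
    (mul_assoc (PowerSeries.mk a) (PowerSeries.mk b) (PowerSeries.mk c))
  simpa [PowerSeries.coeff_mul, Nat.sum_antidiagonal_eq_sum_range_succ_mk] using h.symm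

theorem sum_range_C_mul_X_pow_sub_succ {R : Type*} [Semiring R] (a : ℕ → R) (n : ℕ) :
    ∑ j ∈ range (n + 2), C (a j) * X ^ (n + 1 - j) =
      X * ∑ j ∈ range (n + 1), C (a j) * X ^ (n - j) + C (a (n + 1)) := by
  rw [sum_range_succ, Nat.sub_self, pow_zero, mul_one, mul_sum]
  congr 1
  refine sum_congr rfl fun j hj => ?_
  rw [show n + 1 - j = n - j + 1 by have := mem_range.mp hj; omega, pow_succ, ← X_mul,
    ← mul_assoc, ← mul_assoc, X_mul_C]

section phiConv

variable {R : Type*} [CommSemiring R]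

def phiConv (f : ℕ → R) (n : ℕ) : R :=
  ∑ j ∈ range (n + 1), (phi j : R) * f (n - j)

theorem phiConv_natCast (f : ℕ → ℕ) (n : ℕ) :
    phiConv (fun k => (f k : R)) n = (phiConv f n : ℕ) := by
  simp [phiConv]

theorem phiConv_succ {a f : ℕ → R} {c : R}
    (hf : ∀ k, f (k + 1) = c * ((2 * k + 1) * f k + ∑ i ∈ range (k + 1), a i * f (k - i)))
    {n : ℕ} (ha : ∀ k ≤ n, phiConv a k = phi (k + 1)) :
    phiConv f (n + 1) = phi (n + 1) * f 0 + c * (2 * (n + 1)) * phiConv f n := by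
  unfold phiConv at ha ⊢
  rw [sum_range_succ, Nat.sub_self, add_comm]
  congr 1
  have hunfold : ∀ j ∈ range (n + 1), (phi j : R) * f (n + 1 - j) =
      c * ((2 * ((n - j : ℕ) : R) + 1) * (phi j * f (n - j))) +
        c * (phi j * ∑ i ∈ range (n - j + 1), a i * f (n - j - i)) := by
    intro j hj
    rw [show n + 1 - j = n - j + 1 by have := mem_range.mp hj; omega, hf]
    ring
  have hconv : ∀ k ∈ range (n + 1),
      (∑ j ∈ range (k + 1), (phi j : R) * a (k - j)) * f (n - k) =
        (2 * (k : R) + 1) * (phi k * f (n - k)) := by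
    intro k hk
    rw [ha k (Nat.lt_succ_iff.mp (mem_range.mp hk)), phi_succ]
    push_cast
    ring
  have hweights : ∀ k ∈ range (n + 1),
      (2 * ((n - k : ℕ) : R) + 1) * (phi k * f (n - k)) +
        (2 * (k : R) + 1) * (phi k * f (n - k)) = 2 * (n + 1) * (phi k * f (n - k)) := by
    intro k hk
    have hsplit : ((n - k : ℕ) : R) + k = n := by
      rw [← Nat.cast_add, Nat.sub_add_cancel (Nat.lt_succ_iff.mp (mem_range.mp hk))]
    rw [← hsplit]
    ring
  rw [sum_congr rfl hunfold, sum_add_distrib, ← mul_sum, ← mul_sum,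
    sum_range_convolution_assoc, sum_congr rfl hconv, ← mul_add, ← sum_add_distrib,
    sum_congr rfl hweights, ← mul_sum, mul_assoc]
  ring

end phiConv

theorem phiConv_eq_phi_succ (m : ℕ → ℕ) (hm0 : m 0 = 1)
    (hm : ∀ n : ℕ, m (n + 1) =
      (∑ k ∈ range (n + 1), m k * m (n - k)) + (2 * (n + 1) - 1) * m n) (n : ℕ) :
    phiConv m n = phi (n + 1) := by
  have hrec : ∀ k, m (k + 1) =
      1 * ((2 * k + 1) * m k + ∑ i ∈ range (k + 1), m i * m (k - i)) := by
    intro k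
    rw [hm, show 2 * (k + 1) - 1 = 2 * k + 1 by omega]
    ring
  induction n using Nat.strong_induction_on with
  | _ n ih =>
  cases n with
  | zero => simp [phiConv, phi_zero, phi_succ, hm0]
  | succ n =>
    rw [phiConv_succ hrec fun k hk => ih k (by omega), ih n (by omega), hm0, phi_succ (n + 1)]
    push_cast
    ring

/-- For every `n ≥ 0` the polynomial identity
`Σ_{j=0}^{n} φ(j)·e_{n−j}(v) = 2^n · n! · Σ_{j=0}^{n} binom(2j,j)·4^{−j}·v^{n−j}`
holds in `ℝ[v]`. -/
theorem root_edges_convolution_identity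
    (m : ℕ → ℕ) (hm0 : m 0 = 1)
    (hm : ∀ n : ℕ, m (n + 1) =
      (∑ k ∈ Finset.range (n + 1), m k * m (n - k)) + (2 * (n + 1) - 1) * m n)
    (e : ℕ → Polynomial ℝ) (he0 : e 0 = 1)
    (he : ∀ n : ℕ, e (n + 1) =
      C (2 * ((n : ℝ) + 1) - 1) * X * e n +
        X * ∑ i ∈ Finset.range (n + 1), C ((m i : ℝ)) * e (n - i)) :
    ∀ n : ℕ,
      (∑ j ∈ Finset.range (n + 1), C ((phi j : ℝ)) * e (n - j)) =
        C ((2 : ℝ) ^ n * (n.factorial : ℝ)) *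
          ∑ j ∈ Finset.range (n + 1),
            C (((2 * j).choose j : ℝ) / 4 ^ j) * X ^ (n - j) := by
  have hrec : ∀ k, e (k + 1) =
      X * ((2 * (k : ℝ[X]) + 1) * e k + ∑ i ∈ range (k + 1), (m i : ℝ[X]) * e (k - i)) := by
    intro k
    rw [he]
    simp only [map_natCast, map_sub, map_mul, map_add, map_ofNat, map_one]
    ring
  have hconv (k : ℕ) : phiConv (fun i => (m i : ℝ[X])) k = phi (k + 1) := by
    rw [phiConv_natCast, phiConv_eq_phi_succ m hm0 hm]
  have hscale (n : ℕ) : (2 : ℝ) ^ (n + 1) * (n + 1)! = 2 * (n + 1) * (2 ^ n * n !) := by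
    push_cast [Nat.factorial_succ]
    ring
  intro n
  simp only [map_natCast]
  change phiConv e n = _
  induction n with
  | zero => simp [phiConv, phi_zero, he0]
  | succ n ih =>
    rw [phiConv_succ hrec fun k _ => hconv k, ih, he0, sum_range_C_mul_X_pow_sub_succ,
      mul_add (C _), ← map_mul, two_pow_mul_factorial_mul_choose_div_four_pow, map_natCast,
      hscale]
    simp only [map_mul, map_add, map_ofNat, map_natCast, map_one]
    ring
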